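/- For independent uniform[0,1] random variables X_1,...,X_d with d ≥ 2, the multivariate Kendall's tau of the order statistic vector equals (2^d - (d+1)) / ((2^{d-1} - 1)(d + 1)), and in particular is strictly positive. -/

import Mathlib

open MeasureTheory

/-- The uniform distribution on `[0,1]`. -/
noncomputable def unif : Measure ℝ := volume.restrict (Set.Icc 0 1)

/-- The joint distribution of `d` i.i.d. uniform `[0,1]` random variables. -/
noncomputable def unifPi (d : ℕ) : Measure (Fin d → ℝ) :=
  Measure.pi fun _ => unif

/-- The sorting (order statistic) map: `sortVec x` is the nondecreasing
rearrangement of the vector `x`. -/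
noncomputable def sortVec {d : ℕ} (x : Fin d → ℝ) : Fin d → ℝ :=
  x ∘ Tuple.sort x

/-- `[C_T, C_T]` for the product copula: the probability that the order
statistic of an independent copy is dominated coordinatewise, i.e.
`P(T(V) ≤ T(U))` for `U, V` independent uniform on `[0,1]^d`. -/
noncomputable def biformOrder (d : ℕ) : ℝ :=
  ∫ u, ((unifPi d) {v | ∀ i, sortVec v i ≤ sortVec u i}).toReal ∂(unifPi d)


/-!
Realise `(U, V)` as `2d` i.i.d. atomless coordinates indexed by `Fin d ⊕ Fin d`. Almost surely
they are distinct, and their relative order is then given by a bijection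
`e : Fin (2d) ≃ Fin d ⊕ Fin d`; by exchangeability each of the `(2d)!` ranking events has
probability `1 / (2d)!`. Now `T(V) ≤ T(U)` iff below every threshold there are at least as many
coordinates of `V` as of `U`, so on the ranking event of `e` it holds iff the word read off `e`
(an up-step for each coordinate of `V`, a down-step for each coordinate of `U`) is a Dyck word.
Every Dyck word of semilength `d` comes from exactly `d! * d!` bijections, hence
`[C_T, C_T] = catalan d * d! * d! / (2d)! = 1 / (d + 1)`.
-/

open Finset Function ProbabilityTheory DyckStep
open scoped ENNReal Nat

lemma Nat.add_one_lt_two_pow {d : ℕ} (hd : 2 ≤ d) : d + 1 < 2 ^ d := by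
  induction d, hd using Nat.le_induction with
  | base => norm_num
  | succ d _ ih => rw [pow_succ]; omega

lemma List.count_take_ofFn {α : Type*} [DecidableEq α] {n : ℕ} (f : Fin n → α) (k : ℕ) (a : α) :
    ((List.ofFn f).take k).count a = #{j : Fin n | (j : ℕ) < k ∧ f j = a} := by
  induction n generalizing k with
  | zero => simp
  | succ n ih =>
    cases k with
    | zero => simp
    | succ k =>
      rw [List.ofFn_succ, List.take_succ_cons, List.count_cons, ih, Fin.card_filter_univ_succ]
      simp only [Fin.val_zero, Nat.zero_lt_succ, true_and, Fin.val_succ, Nat.succ_lt_succ_iff,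
        beq_iff_eq]
      split_ifs <;> simp_all [eq_comm]

lemma List.count_ofFn {α : Type*} [DecidableEq α] {n : ℕ} (f : Fin n → α) (a : α) :
    (List.ofFn f).count a = #{j | f j = a} := by
  simpa [List.take_of_length_le] using List.count_take_ofFn f n a

lemma Finset.card_filter_isLeft {β γ : Type*} [Fintype β] [Fintype γ] (p : β ⊕ γ → Prop)
    [DecidablePred p] : #{x | p x ∧ x.isLeft} = #{b | p (.inl b)} := by
  rw [card_filter, card_filter, Fintype.sum_sum_type]
  simp

lemma Finset.card_filter_isRight {β γ : Type*} [Fintype β] [Fintype γ] (p : β ⊕ γ → Prop)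
    [DecidablePred p] : #{x | p x ∧ x.isRight} = #{c | p (.inr c)} := by
  rw [card_filter, card_filter, Fintype.sum_sum_type]
  simp

def Equiv.subtypeEquivSumEquivProd {α β γ : Type*} (p : α → Prop) [DecidablePred p] :
    {e : α ≃ β ⊕ γ // ∀ a, (e a).isRight ↔ p a} ≃ ({a // ¬ p a} ≃ β) × ({a // p a} ≃ γ) where
  toFun e := ((e.1.subtypeEquiv fun a => by rw [← Sum.not_isRight, e.2]).trans sumIsLeft,
    (e.1.subtypeEquiv fun a => (e.2 a).symm).trans sumIsRight)
  invFun fg := ⟨(sumCompl p).symm.trans ((fg.2.sumCongr fg.1).trans (sumComm _ _)), fun a => by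
    by_cases h : p a <;> simp [h, sumCompl_symm_apply_of_pos, sumCompl_symm_apply_of_neg]⟩
  left_inv e := by
    ext a
    by_cases h : p a
    · simp [h, sumCompl_symm_apply_of_pos]
    · simp [h, sumCompl_symm_apply_of_neg]
  right_inv fg := by
    ext ⟨a, ha⟩ <;> simp [ha, sumCompl_symm_apply_of_pos, sumCompl_symm_apply_of_neg]

lemma measurePreserving_comp_perm {ι α : Type*} [Fintype ι] [MeasurableSpace α] (μ : Measure α)
    [SigmaFinite μ] (σ : Equiv.Perm ι) :
    MeasurePreserving (fun w : ι → α => w ∘ σ) (Measure.pi fun _ => μ)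
      (Measure.pi fun _ => μ) := by
  convert measurePreserving_piCongrLeft (fun _ : ι => μ) σ.symm
  ext w
  simp [MeasurableEquiv.coe_piCongrLeft, Equiv.piCongrLeft_apply_eq_cast]

lemma measure_eval_eq_eval_eq_zero {ι : Type*} [Fintype ι] (ν : Measure ℝ) [IsProbabilityMeasure ν]
    [NullSingletonClass ν] {i j : ι} (hij : i ≠ j) :
    Measure.pi (fun _ : ι => ν) {w | w i = w j} = 0 := by
  classical
  have hind : (fun w : ι → ℝ => w i) ⟂ᵢ[Measure.pi fun _ => ν] fun w => w j :=
    (iIndepFun_pi (X := fun _ => id) fun _ => aemeasurable_id).indepFun hij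
  have hmap := (indepFun_iff_map_prod_eq_prod_map_map
    (measurable_pi_apply i).aemeasurable (measurable_pi_apply j).aemeasurable).1 hind
  have hdiag : MeasurableSet {p : ℝ × ℝ | p.1 = p.2} := measurableSet_diagonal
  calc Measure.pi (fun _ : ι => ν) {w | w i = w j}
      = (Measure.pi fun _ : ι => ν).map (fun w => (w i, w j)) {p | p.1 = p.2} := by
        rw [Measure.map_apply (by fun_prop) hdiag]; rfl
    _ = 0 := by
        rw [hmap, Measure.pi_map_eval, Measure.pi_map_eval, Measure.prod_apply hdiag]
        simp

lemma ae_injective {ι : Type*} [Fintype ι] (ν : Measure ℝ) [IsProbabilityMeasure ν]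
    [NullSingletonClass ν] : ∀ᵐ w ∂(Measure.pi fun _ : ι => ν), Injective w := by
  have h : ∀ᵐ w ∂(Measure.pi fun _ : ι => ν), ∀ i j, w i = w j → i = j := by
    simp only [ae_all_iff]
    intro i j
    by_cases hij : i = j
    · exact .of_forall fun _ _ => hij
    · exact (measure_eq_zero_iff_ae_notMem.1 (measure_eval_eq_eval_eq_zero ν hij)).mono
        fun _ hw h => absurd h hw
  exact h.mono fun w hw i j => hw i j

section OrderStatistics

variable {α : Type*} [LinearOrder α]

def countLE {ι : Type*} [Fintype ι] (x : ι → α) (t : α) : ℕ := #{j | x j ≤ t}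

lemma countLE_comp_equiv {ι κ : Type*} [Fintype ι] [Fintype κ] (x : ι → α) (σ : κ ≃ ι)
    (t : α) : countLE (x ∘ σ) t = countLE x t :=
  card_equiv σ fun _ => by simp

lemma Monotone.le_iff_lt_countLE {n : ℕ} {g : Fin n → α} (hg : Monotone g) (i : Fin n) (c : α) :
    g i ≤ c ↔ (i : ℕ) < countLE g c := by
  constructor
  · intro h
    calc (i : ℕ) < #(Iic i) := by simp
      _ ≤ countLE g c := card_le_card fun j hj => by
        simpa using (hg (mem_Iic.1 hj)).trans h
  · intro h
    by_contra! hc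
    have : countLE g c ≤ i :=
      calc countLE g c ≤ #(Iio i) := card_le_card fun j hj => by
            simp only [mem_filter, mem_univ, true_and] at hj
            simpa using lt_of_not_ge fun hij => (hc.trans_le (hg hij)).not_ge hj
        _ = i := by simp
    omega

lemma StrictMono.countLE_apply {n : ℕ} {g : Fin n → α} (hg : StrictMono g) (i : Fin n) :
    countLE g (g i) = i + 1 := by
  rw [countLE, ← Fin.card_Iic]
  congr 1
  ext
  simp [hg.le_iff_le]

end OrderStatistics

lemma sortVec_le_iff {d : ℕ} (x : Fin d → ℝ) (i : Fin d) (c : ℝ) :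
    sortVec x i ≤ c ↔ (i : ℕ) < countLE x c := by
  rw [sortVec, (Tuple.monotone_sort x).le_iff_lt_countLE, countLE_comp_equiv]

lemma sortVec_le_sortVec_iff {d : ℕ} (u v : Fin d → ℝ) :
    sortVec v ≤ sortVec u ↔ ∀ t, countLE u t ≤ countLE v t := by
  constructor
  · intro h t
    obtain h0 | hpos := Nat.eq_zero_or_pos (countLE u t)
    · simp [h0]
    · have hd : countLE u t ≤ d := (card_le_univ _).trans_eq (Fintype.card_fin d)
      have hu : sortVec u ⟨countLE u t - 1, by omega⟩ ≤ t := by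
        rw [sortVec_le_iff]
        simp only
        omega
      have hv := (sortVec_le_iff v _ t).1 ((h _).trans hu)
      simp only at hv
      omega
  · intro h i
    exact (sortVec_le_iff v i _).2 (((sortVec_le_iff u i _).1 le_rfl).trans_le (h _))

lemma measurable_countLE {ι : Type*} [Fintype ι] (t : ℝ) :
    Measurable fun x : ι → ℝ => countLE x t := by
  simp only [countLE, card_filter]
  exact Finset.measurable_sum _ fun j _ =>
    Measurable.ite (measurable_pi_apply j measurableSet_Iic) measurable_const measurable_const

lemma measurable_sortVec (d : ℕ) : Measurable (sortVec : (Fin d → ℝ) → Fin d → ℝ) := by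
  refine measurable_pi_lambda _ fun i => measurable_of_Iic fun c => ?_
  have : (fun x => sortVec x i) ⁻¹' Set.Iic c = (fun x => countLE x c) ⁻¹' Set.Ioi (i : ℕ) := by
    ext x
    simp [sortVec_le_iff]
  rw [this]
  exact measurable_countLE c measurableSet_Ioi

lemma measurableSet_sortVec_le_sortVec (d : ℕ) :
    MeasurableSet {p : (Fin d → ℝ) × (Fin d → ℝ) | sortVec p.2 ≤ sortVec p.1} :=
  measurableSet_le ((measurable_sortVec d).comp measurable_snd)
    ((measurable_sortVec d).comp measurable_fst)

section RankSet

variable {ι α : Type*} [LinearOrder α] {n : ℕ}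

def rankSet (e : Fin n ≃ ι) : Set (ι → α) := {w | StrictMono (w ∘ e)}

lemma eq_of_mem_rankSet {e e' : Fin n ≃ ι} {w : ι → α} (hw : w ∈ rankSet e)
    (hw' : w ∈ rankSet e') : e = e' := by
  have hinj : Injective w := hw.injective.of_comp_right e.surjective
  have hrange : Set.range (w ∘ e) = Set.range (w ∘ e') := by
    rw [Set.range_comp, Set.range_comp, e.range_eq_univ, e'.range_eq_univ]
  exact Equiv.ext fun k => hinj (congrFun ((hw.range_inj hw').1 hrange) k)

lemma exists_mem_rankSet [Fintype ι] (hn : Fintype.card ι = n) {w : ι → α} (hw : Injective w) :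
    ∃ e : Fin n ≃ ι, w ∈ rankSet e := by
  let e₀ := (Fintype.equivFinOfCardEq hn).symm
  exact ⟨(Tuple.sort (w ∘ e₀)).trans e₀, (Tuple.monotone_sort _).strictMono_of_injective
    ((hw.comp e₀.injective).comp (Tuple.sort _).injective)⟩

lemma rankSet_eq_preimage (e e' : Fin n ≃ ι) :
    (rankSet e : Set (ι → α)) = (fun w => w ∘ (e'.symm.trans e)) ⁻¹' rankSet e' := by
  ext w
  simp [rankSet, comp_def]

lemma measurableSet_rankSet (e : Fin n ≃ ι) : MeasurableSet (rankSet e : Set (ι → ℝ)) := by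
  have : rankSet e = ⋂ (a : Fin n) (b : Fin n) (_ : a < b), {w : ι → ℝ | w (e a) < w (e b)} := by
    ext w
    simp [rankSet, StrictMono]
  rw [this]
  exact .iInter fun a => .iInter fun b => .iInter fun _ =>
    measurableSet_lt (measurable_pi_apply _) (measurable_pi_apply _)

end RankSet

section RankSetMeasure

variable {ι : Type*} [Fintype ι] {n : ℕ} (ν : Measure ℝ)

lemma measure_rankSet_eq [SigmaFinite ν] (e e' : Fin n ≃ ι) :
    Measure.pi (fun _ : ι => ν) (rankSet e) = Measure.pi (fun _ : ι => ν) (rankSet e') := by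
  rw [rankSet_eq_preimage e e']
  exact (measurePreserving_comp_perm ν _).measure_preimage
    (measurableSet_rankSet e').nullMeasurableSet

lemma measure_biUnion_rankSet [SigmaFinite ν] (s : Finset (Fin n ≃ ι)) (e : Fin n ≃ ι) :
    Measure.pi (fun _ : ι => ν) (⋃ e' ∈ s, rankSet e') =
      #s * Measure.pi (fun _ : ι => ν) (rankSet e) := by
  rw [measure_biUnion_finset
    (fun e₁ _ e₂ _ hne => Set.disjoint_left.2 fun _ h₁ h₂ => hne (eq_of_mem_rankSet h₁ h₂))
    fun e' _ => measurableSet_rankSet e', sum_congr rfl fun e' _ => measure_rankSet_eq ν e' e,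
    sum_const, nsmul_eq_mul]

variable [IsProbabilityMeasure ν] [NullSingletonClass ν]

lemma ae_exists_mem_rankSet (hn : Fintype.card ι = n) :
    ∀ᵐ w ∂(Measure.pi fun _ : ι => ν), ∃ e : Fin n ≃ ι, w ∈ rankSet e :=
  (ae_injective ν).mono fun _ hw => exists_mem_rankSet hn hw

lemma factorial_mul_measure_rankSet (e : Fin n ≃ ι) :
    (n ! : ℝ≥0∞) * Measure.pi (fun _ : ι => ν) (rankSet e) = 1 := by
  classical
  have hn : Fintype.card ι = n := by simpa using (Fintype.card_congr e).symm
  have hcover : (⋃ e' ∈ (univ : Finset (Fin n ≃ ι)), rankSet e') =ᵐ[Measure.pi fun _ => ν]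
      (Set.univ : Set (ι → ℝ)) :=
    Filter.eventuallyEq_set.2 <| (ae_exists_mem_rankSet ν hn).mono fun w ⟨e', he'⟩ => by
      simpa using ⟨e', he'⟩
  rw [← measure_univ (μ := Measure.pi fun _ : ι => ν), ← measure_congr hcover,
    measure_biUnion_rankSet ν _ e, card_univ, Fintype.card_equiv e, Fintype.card_fin]

theorem factorial_mul_measure_eq_card (hn : Fintype.card ι = n) (S : Set (ι → ℝ))
    (P : (Fin n ≃ ι) → Prop) (hS : ∀ e, ∀ w ∈ rankSet e, w ∈ S ↔ P e) :
    (n ! : ℝ≥0∞) * Measure.pi (fun _ : ι => ν) S = Nat.card {e // P e} := by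
  classical
  let e₀ := (Fintype.equivFinOfCardEq hn).symm
  have hS' : S =ᵐ[Measure.pi fun _ => ν] ⋃ e ∈ ({e | P e} : Finset _), rankSet e :=
    Filter.eventuallyEq_set.2 <| (ae_exists_mem_rankSet ν hn).mono fun w ⟨e, he⟩ => by
      simp only [hS e w he, mem_filter, mem_univ, true_and, Set.mem_iUnion, exists_prop]
      exact ⟨fun h => ⟨e, h, he⟩, fun ⟨e', h', he'⟩ => eq_of_mem_rankSet he' he ▸ h'⟩
  rw [measure_congr hS', measure_biUnion_rankSet ν _ e₀, mul_left_comm,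
    factorial_mul_measure_rankSet, mul_one, Nat.card_eq_fintype_card, Fintype.card_subtype]

end RankSetMeasure

section RankWord

variable {n : ℕ} {β γ : Type*}

def rankWord (e : Fin n ≃ β ⊕ γ) : List DyckStep :=
  List.ofFn fun j => if (e j).isRight then U else D

def IsBallot (l : List DyckStep) : Prop :=
  ∀ k, (l.take k).count D ≤ (l.take k).count U

lemma count_take_rankWord_D (e : Fin n ≃ β ⊕ γ) (k : ℕ) :
    ((rankWord e).take k).count D = #{j : Fin n | (j : ℕ) < k ∧ (e j).isLeft} := by
  rw [rankWord, List.count_take_ofFn]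
  congr! 3 with j
  cases e j <;> simp

lemma count_take_rankWord_U (e : Fin n ≃ β ⊕ γ) (k : ℕ) :
    ((rankWord e).take k).count U = #{j : Fin n | (j : ℕ) < k ∧ (e j).isRight} := by
  rw [rankWord, List.count_take_ofFn]
  congr! 3 with j
  cases e j <;> simp

variable [Fintype β] [Fintype γ]

lemma count_rankWord_D (e : Fin n ≃ β ⊕ γ) : (rankWord e).count D = Fintype.card β := by
  have h := count_take_rankWord_D e n
  rw [List.take_of_length_le (by simp [rankWord])] at h
  rw [h, card_equiv e (t := {x | x.isLeft}) (by simp)]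
  simpa using card_filter_isLeft (β := β) (γ := γ) fun _ => True

lemma count_rankWord_U (e : Fin n ≃ β ⊕ γ) : (rankWord e).count U = Fintype.card γ := by
  have h := count_take_rankWord_U e n
  rw [List.take_of_length_le (by simp [rankWord])] at h
  rw [h, card_equiv e (t := {x | x.isRight}) (by simp)]
  simpa using card_filter_isRight (β := β) (γ := γ) fun _ => True

lemma card_rankWord_eq [DecidableEq β] [DecidableEq γ] {l : List DyckStep} (hl : l.length = n)
    (hD : l.count D = Fintype.card β) (hU : l.count U = Fintype.card γ) :
    Nat.card {e : Fin n ≃ β ⊕ γ // rankWord e = l} = (Fintype.card β)! * (Fintype.card γ)! := by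
  obtain ⟨s, rfl⟩ : ∃ s : Fin n → DyckStep, List.ofFn s = l := by
    subst hl
    exact ⟨_, List.ofFn_getElem⟩
  have hfiber : ∀ e : Fin n ≃ β ⊕ γ, rankWord e = List.ofFn s ↔ ∀ j, (e j).isRight ↔ s j = U := by
    intro e
    rw [rankWord, List.ofFn_inj, funext_iff]
    refine forall_congr' fun j => ?_
    cases e j <;> cases s j <;> simp
  have hcardU : Fintype.card {j // s j = U} = Fintype.card γ := by
    rw [Fintype.card_subtype, ← List.count_ofFn, hU]
  have hcardD : Fintype.card {j // ¬ s j = U} = Fintype.card β := by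
    rw [Fintype.card_subtype, ← hD, List.count_ofFn]
    congr! 2 with j
    cases s j <;> simp
  rw [Nat.card_congr ((Equiv.subtypeEquivRight hfiber).trans (Equiv.subtypeEquivSumEquivProd _)),
    Nat.card_prod, Nat.card_eq_fintype_card, Nat.card_eq_fintype_card,
    Fintype.card_equiv (Fintype.equivOfCardEq hcardD),
    Fintype.card_equiv (Fintype.equivOfCardEq hcardU), hcardD, hcardU]

end RankWord

def isBallotRankWordEquiv (d : ℕ) :
    {e : Fin (d + d) ≃ Fin d ⊕ Fin d // IsBallot (rankWord e)} ≃
      Σ p : {p : DyckWord // p.semilength = d},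
        {e : Fin (d + d) ≃ Fin d ⊕ Fin d // rankWord e = p.1.toList} where
  toFun e := ⟨⟨⟨rankWord e.1, by rw [count_rankWord_U, count_rankWord_D], e.2⟩,
    by simp [DyckWord.semilength, count_rankWord_U]⟩, e.1, rfl⟩
  invFun x := ⟨x.2.1, by simpa [IsBallot, x.2.2] using x.1.1.count_D_le_count_U⟩
  left_inv _ := rfl
  right_inv := by
    rintro ⟨⟨⟨l, hUD, hballot⟩, hp⟩, e, he⟩
    dsimp only at he
    subst he
    rfl

lemma card_isBallot_rankWord (d : ℕ) :
    Nat.card {e : Fin (d + d) ≃ Fin d ⊕ Fin d // IsBallot (rankWord e)} =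
      catalan d * (d ! * d !) := by
  have hfiber : ∀ p : {p : DyckWord // p.semilength = d},
      Nat.card {e : Fin (d + d) ≃ Fin d ⊕ Fin d // rankWord e = p.1.toList} = d ! * d ! := by
    intro p
    have hlen : p.1.toList.length = d + d := by
      rw [← p.1.two_mul_semilength_eq_length, p.2, two_mul]
    have hD : p.1.toList.count D = d := p.1.semilength_eq_count_D.symm.trans p.2
    rw [card_rankWord_eq hlen (hD.trans (Fintype.card_fin d).symm)
      (p.2.trans (Fintype.card_fin d).symm), Fintype.card_fin]
  rw [Nat.card_congr (isBallotRankWordEquiv d), Nat.card_sigma, sum_congr rfl fun p _ => hfiber p,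
    sum_const, card_univ, DyckWord.card_dyckWord_semilength_eq_catalan, smul_eq_mul]

lemma succ_mul_catalan_mul_factorial (d : ℕ) :
    (d + 1) * (catalan d * (d ! * d !)) = (d + d)! := by
  rw [← mul_assoc, succ_mul_catalan_eq_centralBinom, Nat.centralBinom_eq_two_mul_choose, two_mul,
    ← mul_assoc, Nat.add_choose_mul_factorial_mul_factorial]

section Dominance

variable {n : ℕ} {β γ : Type*} [Fintype β] [Fintype γ] {e : Fin n ≃ β ⊕ γ} {w : β ⊕ γ → ℝ}

lemma countLE_comp_inl_of_mem_rankSet (hw : w ∈ rankSet e) (t : ℝ) :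
    countLE (w ∘ .inl) t = ((rankWord e).take (countLE (w ∘ e) t)).count D := by
  have hprefix : ∀ j : Fin n, (j : ℕ) < countLE (w ∘ e) t ↔ w (e j) ≤ t :=
    fun j => (hw.monotone.le_iff_lt_countLE j t).symm
  simp_rw [count_take_rankWord_D, hprefix]
  rw [card_equiv e (t := {x | w x ≤ t ∧ x.isLeft}) (by simp), card_filter_isLeft]
  rfl

lemma countLE_comp_inr_of_mem_rankSet (hw : w ∈ rankSet e) (t : ℝ) :
    countLE (w ∘ .inr) t = ((rankWord e).take (countLE (w ∘ e) t)).count U := by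
  have hprefix : ∀ j : Fin n, (j : ℕ) < countLE (w ∘ e) t ↔ w (e j) ≤ t :=
    fun j => (hw.monotone.le_iff_lt_countLE j t).symm
  simp_rw [count_take_rankWord_U, hprefix]
  rw [card_equiv e (t := {x | w x ≤ t ∧ x.isRight}) (by simp), card_filter_isRight]
  rfl

lemma sortVec_le_sortVec_iff_isBallot {d : ℕ} {e : Fin n ≃ Fin d ⊕ Fin d}
    {w : Fin d ⊕ Fin d → ℝ} (hw : w ∈ rankSet e) :
    sortVec (w ∘ .inr) ≤ sortVec (w ∘ .inl) ↔ IsBallot (rankWord e) := by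
  simp only [sortVec_le_sortVec_iff, countLE_comp_inl_of_mem_rankSet hw,
    countLE_comp_inr_of_mem_rankSet hw]
  refine ⟨fun h k => ?_, fun h t => h _⟩
  have hlen : (rankWord e).length = n := by simp [rankWord]
  rw [List.take_eq_take_min, hlen]
  obtain hk | hk := Nat.eq_zero_or_pos (min k n)
  · simp [hk]
  -- the threshold `w (e (k - 1))` cuts off exactly the first `k` ranks
  · have := h (w (e ⟨min k n - 1, by omega⟩))
    rwa [← comp_apply (f := w), hw.countLE_apply, Nat.sub_add_cancel hk] at this

end Dominance

theorem measure_sortVec_le_sortVec (ν : Measure ℝ) [IsProbabilityMeasure ν]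
    [NullSingletonClass ν] (d : ℕ) :
    ((Measure.pi fun _ : Fin d => ν).prod (Measure.pi fun _ : Fin d => ν))
      {p | sortVec p.2 ≤ sortVec p.1} = ((d : ℝ≥0∞) + 1)⁻¹ := by
  rw [← (measurePreserving_sumPiEquivProdPi fun _ : Fin d ⊕ Fin d => ν).measure_preimage
    (measurableSet_sortVec_le_sortVec d).nullMeasurableSet]
  set m := Measure.pi (fun _ : Fin d ⊕ Fin d => ν) _
  have hm : ((d + d)! : ℝ≥0∞) * m = (catalan d * (d ! * d !) : ℕ) := by
    rw [← card_isBallot_rankWord]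
    exact factorial_mul_measure_eq_card ν (by simp) _ _
      fun e w hw => sortVec_le_sortVec_iff_isBallot hw
  have hcount : ((d : ℝ≥0∞) + 1) * (catalan d * (d ! * d !) : ℕ) = (d + d)! := by
    exact_mod_cast succ_mul_catalan_mul_factorial d
  have hfact : ((d + d)! : ℝ≥0∞) ≠ 0 := by positivity
  refine ENNReal.eq_inv_of_mul_eq_one_left
    ((ENNReal.mul_right_inj hfact (ENNReal.natCast_ne_top _)).1 ?_)
  calc ((d + d)! : ℝ≥0∞) * (m * (d + 1)) = (d + 1) * ((d + d)! * m) := by ring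
    _ = (d + d)! * 1 := by rw [hm, hcount, mul_one]

instance : IsProbabilityMeasure unif :=
  ⟨by simp [unif]⟩

instance : NullSingletonClass unif := by
  unfold unif
  infer_instance

lemma biformOrder_eq (d : ℕ) : biformOrder d = ((d : ℝ) + 1)⁻¹ := by
  have hS := measurableSet_sortVec_le_sortVec d
  have h := congrArg ENNReal.toReal (measure_sortVec_le_sortVec unif d)
  rw [Measure.prod_apply hS, ← integral_toReal] at h
  · calc biformOrder d = ((d : ℝ≥0∞) + 1)⁻¹.toReal := h
      _ = ((d : ℝ) + 1)⁻¹ := by simp [ENNReal.toReal_inv, ENNReal.toReal_add]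
  · exact (measurable_measure_prodMk_left hS).aemeasurable
  · exact .of_forall fun _ => measure_lt_top _ _

theorem stmt10 (d : ℕ) (hd : 2 ≤ d) :
    (2 ^ d * biformOrder d - 1) / (2 ^ (d - 1) - 1)
        = (2 ^ d - (d + 1)) / ((2 ^ (d - 1) - 1) * (d + 1)) ∧
      0 < (2 ^ d * biformOrder d - 1) / (2 ^ (d - 1) - 1) := by
  have hpow : (d : ℝ) + 1 < 2 ^ d := by exact_mod_cast Nat.add_one_lt_two_pow hd
  have hpow' : (1 : ℝ) < 2 ^ (d - 1) := by exact_mod_cast Nat.one_lt_two_pow (by omega)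
  have heq : (2 ^ d * biformOrder d - 1) / (2 ^ (d - 1) - 1)
      = (2 ^ d - (d + 1)) / ((2 ^ (d - 1) - 1) * (d + 1)) := by
    rw [biformOrder_eq]
    field_simp
  exact ⟨heq, heq ▸ div_pos (by linarith) (mul_pos (by linarith) (by positivity))⟩
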